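/- Fix τ > 0 and c > 0, and let r_n ≤ ⌊(n−1)/2⌋ be a sequence with r_n → ∞ and (log n)^2 r_n^3 / n → 0. Suppose that for each n the random variables X_1, ..., X_n and i.i.d. standard normals X̃_1, ..., X̃_n are defined on a common probability space with E( exp( (c/τ) max_{1≤j≤n} |S_j − S̃_j| ) ) ≤ 1 + n/τ, where S_j = ∑_{i=1}^j X_i and S̃_j = ∑_{i=1}^j X̃_i. Define S_{n,k} = √(2/n) ∑_{j=1}^n X_j cos(2πjk/n) and S̃_{n,k} = √(2/n) ∑_{j=1}^n X̃_j cos(2πjk/n). Then for every ε > 0, P( max_{1 ≤ k ≤ r_n} | S_{n,k} − S̃_{n,k} | > ε √(2π/r_n) ) → 0 as n → ∞. -/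

import Mathlib

/-!
Summation by parts bounds `|S_{n,k} − S̃_{n,k}|` by `√(2/n) (1 + 2πk) D_n`, where
`D_n = max_{j ≤ n} |S_j − S̃_j|`, because `j ↦ cos (2πjk/n)` moves by at most `2πk/n` per step.
So for `k ≤ r_n` the deviation event lies in `{D_n > t_n}` with `t_n ≍ ε √n / r_n^{3/2}`, and the
exponential Markov inequality bounds its probability by `(1 + n/τ) exp (−(c/τ) t_n)`. The rate
assumption `(log n)² r_n³ / n → 0` gives `(c/τ) t_n ≥ 2 log n` eventually, so this is `O(1/n)`.
-/

open MeasureTheory ProbabilityTheory Filter Real Finset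

theorem le_ciSup_of_mem_finset {ι α : Type*} [ConditionallyCompleteLattice α] (f : ι → α)
    {s : Finset ι} {j : ι} (hj : j ∈ s) :
    f j ≤ ⨆ i ∈ s, f i := by
  refine le_ciSup₂ (f := fun i (_ : i ∈ s) => f i) ?_ j hj
  refine (s.finite_toSet.image f).bddAbove.mono ?_
  rintro _ ⟨_, ⟨i, rfl⟩, ⟨hi, rfl⟩⟩
  exact ⟨i, hi, rfl⟩

theorem sum_Icc_mul_eq_sum_partialSum_mul_sub {R : Type*} [CommRing R] (d a : ℕ → R) (m : ℕ) :
    ∑ j ∈ Icc 1 (m + 1), d j * a j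
      = ∑ j ∈ Icc 1 m, (∑ i ∈ Icc 1 j, d i) * (a j - a (j + 1))
        + (∑ i ∈ Icc 1 (m + 1), d i) * a (m + 1) := by
  induction m with
  | zero => simp
  | succ m ih =>
    rw [sum_Icc_succ_top (by omega : 1 ≤ m + 1 + 1) (fun j => d j * a j), ih,
      sum_Icc_succ_top (by omega : 1 ≤ m + 1) (fun j => (∑ i ∈ Icc 1 j, d i) * (a j - a (j + 1))),
      sum_Icc_succ_top (by omega : 1 ≤ m + 1 + 1) d]
    ring

theorem abs_sum_Icc_mul_le_of_abs_partialSum_le {d a : ℕ → ℝ} {m : ℕ} {L A M : ℝ}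
    (hL : ∀ j ∈ Icc 1 m, |a j - a (j + 1)| ≤ L) (hA : |a (m + 1)| ≤ A)
    (hM : ∀ j ∈ Icc 1 (m + 1), |∑ i ∈ Icc 1 j, d i| ≤ M) :
    |∑ j ∈ Icc 1 (m + 1), d j * a j| ≤ (m * L + A) * M := by
  have hM0 : 0 ≤ M := (abs_nonneg _).trans (hM (m + 1) (by simp))
  rw [sum_Icc_mul_eq_sum_partialSum_mul_sub]
  calc _ ≤ ∑ j ∈ Icc 1 m, |∑ i ∈ Icc 1 j, d i| * |a j - a (j + 1)|
          + |∑ i ∈ Icc 1 (m + 1), d i| * |a (m + 1)| := by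
        refine (abs_add_le _ _).trans ?_
        simp only [← abs_mul]
        gcongr
        exact abs_sum_le_sum_abs _ _
    _ ≤ ∑ _j ∈ Icc 1 m, M * L + M * A := by
        refine add_le_add (sum_le_sum fun j hj => ?_) ?_
        · exact mul_le_mul (hM j (by simp at hj ⊢; omega)) (hL j hj) (abs_nonneg _) hM0
        · exact mul_le_mul (hM (m + 1) (by simp)) hA (abs_nonneg _) hM0
    _ = (m * L + A) * M := by simp; ring

/-- The paper's `S_{n,k}` for the sample `x`; `partialSumDist n x y` is `max_{j ≤ n} |S_j − S̃_j|`. -/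
noncomputable def cosineSum (n k : ℕ) (x : ℕ → ℝ) : ℝ :=
  √(2 / n) * ∑ j ∈ Icc 1 n, x j * cos (2 * π * j * k / n)

noncomputable def partialSumDist (n : ℕ) (x y : ℕ → ℝ) : ℝ :=
  ⨆ j ∈ Icc 1 n, |∑ i ∈ Icc 1 j, x i - ∑ i ∈ Icc 1 j, y i|

theorem abs_partialSum_sub_le_partialSumDist {n j : ℕ} (x y : ℕ → ℝ) (hj : j ∈ Icc 1 n) :
    |∑ i ∈ Icc 1 j, (x i - y i)| ≤ partialSumDist n x y := by
  rw [sum_sub_distrib]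
  exact le_ciSup_of_mem_finset (fun j => |∑ i ∈ Icc 1 j, x i - ∑ i ∈ Icc 1 j, y i|) hj

theorem partialSumDist_nonneg {n : ℕ} (hn : 0 < n) (x y : ℕ → ℝ) : 0 ≤ partialSumDist n x y :=
  (abs_nonneg _).trans (abs_partialSum_sub_le_partialSumDist x y (mem_Icc.2 ⟨le_rfl, hn⟩))

theorem abs_sum_mul_cos_le {n : ℕ} (hn : 0 < n) (k : ℕ) {d : ℕ → ℝ} {M : ℝ}
    (hM : ∀ j ∈ Icc 1 n, |∑ i ∈ Icc 1 j, d i| ≤ M) :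
    |∑ j ∈ Icc 1 n, d j * cos (2 * π * j * k / n)| ≤ (1 + 2 * π * k) * M := by
  obtain ⟨m, rfl⟩ : ∃ m, n = m + 1 := ⟨n - 1, by omega⟩
  have hstep : ∀ j ∈ Icc 1 m, |cos (2 * π * j * k / (m + 1 : ℕ))
      - cos (2 * π * (j + 1 : ℕ) * k / (m + 1 : ℕ))| ≤ 2 * π * k / (m + 1 : ℕ) := by
    intro j _
    refine (abs_cos_sub_cos_le _ _).trans (le_of_eq ?_)
    rw [← abs_of_nonneg (by positivity : 0 ≤ 2 * π * k / (m + 1 : ℕ)), ← abs_neg]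
    congr 1
    push_cast
    ring
  refine (abs_sum_Icc_mul_le_of_abs_partialSum_le hstep (abs_cos_le_one _) hM).trans ?_
  have hM0 : 0 ≤ M := (abs_nonneg _).trans (hM 1 (by simp))
  have hcoef : (m : ℝ) * (2 * π * k / (m + 1 : ℕ)) ≤ 2 * π * k := by
    rw [mul_div_assoc', div_le_iff₀ (by positivity)]
    push_cast
    nlinarith [pi_pos, (by positivity : (0 : ℝ) ≤ 2 * π * k)]
  exact mul_le_mul_of_nonneg_right (by linarith) hM0

theorem abs_cosineSum_sub_le {n : ℕ} (hn : 0 < n) (k : ℕ) (x y : ℕ → ℝ) :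
    |cosineSum n k x - cosineSum n k y| ≤ √(2 / n) * (1 + 2 * π * k) * partialSumDist n x y := by
  have hdiff : cosineSum n k x - cosineSum n k y
      = √(2 / n) * ∑ j ∈ Icc 1 n, (x j - y j) * cos (2 * π * j * k / n) := by
    simp only [cosineSum, ← mul_sub, ← sum_sub_distrib, sub_mul]
  rw [hdiff, abs_mul, abs_of_nonneg (sqrt_nonneg _), mul_assoc]
  gcongr
  exact abs_sum_mul_cos_le hn k fun j hj => abs_partialSum_sub_le_partialSumDist x y hj

theorem measurable_partialSumDist {Ω : Type*} [MeasurableSpace Ω] (n : ℕ) {x y : ℕ → Ω → ℝ}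
    (hx : ∀ i, Measurable (x i)) (hy : ∀ i, Measurable (y i)) :
    Measurable fun ω => partialSumDist n (x · ω) (y · ω) :=
  Measurable.biSup (Icc 1 n : Set ℕ) (Set.to_countable _) fun _ _ =>
    ((measurable_sum _ fun i _ => hx i).sub (measurable_sum _ fun i _ => hy i)).abs

theorem measure_lt_le_exp_mul_lintegral {Ω : Type*} [MeasurableSpace Ω] (μ : Measure Ω)
    {f : Ω → ℝ} (hf : Measurable f) {l : ℝ} (hl : 0 ≤ l) (t : ℝ) :
    μ {ω | t < f ω}
      ≤ ENNReal.ofReal (exp (-(l * t))) * ∫⁻ ω, ENNReal.ofReal (exp (l * f ω)) ∂μ := by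
  have hsub : {ω | t < f ω} ⊆ {ω | ENNReal.ofReal (exp (l * t)) ≤ ENNReal.ofReal (exp (l * f ω))} :=
    fun ω hω => ENNReal.ofReal_le_ofReal (exp_le_exp.2 (mul_le_mul_of_nonneg_left (le_of_lt hω) hl))
  refine (measure_mono hsub).trans ((meas_ge_le_lintegral_div ?_ ?_ ENNReal.ofReal_ne_top).trans ?_)
  · exact (ENNReal.measurable_ofReal.comp (measurable_exp.comp (hf.const_mul l))).aemeasurable
  · exact (ENNReal.ofReal_pos.2 (exp_pos _)).ne'
  · rw [ENNReal.div_eq_inv_mul, ← ENNReal.ofReal_inv_of_pos (exp_pos _), exp_neg]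

theorem eventually_two_mul_log_le {r : ℕ → ℕ} (hr : Tendsto r atTop atTop)
    (hrate : Tendsto (fun n : ℕ => log n ^ 2 * (r n : ℝ) ^ 3 / n) atTop (nhds 0))
    {K : ℝ} (hK : 0 < K) :
    ∀ᶠ n : ℕ in atTop, 2 * log n ≤ K * √(2 * π / r n) / (√(2 / n) * (1 + 2 * π * r n)) := by
  filter_upwards [hrate.eventually (eventually_le_nhds (by positivity : 0 < K ^ 2 * π / 256)),
    eventually_ge_atTop 1, hr.eventually_ge_atTop 1] with n hq hn hrn
  have hN : (1 : ℝ) ≤ n := by exact_mod_cast hn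
  have hR : (1 : ℝ) ≤ r n := by exact_mod_cast hrn
  have hsq : (K * √(2 * π / r n) / (√(2 / n) * (1 + 2 * π * r n))) ^ 2
      = K ^ 2 * π * n / (r n * (1 + 2 * π * r n) ^ 2) := by
    rw [div_pow, mul_pow, mul_pow, sq_sqrt (by positivity), sq_sqrt (by positivity)]
    field_simp
  have h8 : 1 + 2 * π * r n ≤ 8 * r n := by nlinarith [pi_lt_d2]
  rw [div_le_iff₀ (by positivity)] at hq
  have hsq_le : (2 * log n) ^ 2 ≤ (K * √(2 * π / r n) / (√(2 / n) * (1 + 2 * π * r n))) ^ 2 := by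
    rw [hsq, le_div_iff₀ (by positivity)]
    calc (2 * log n) ^ 2 * (r n * (1 + 2 * π * r n) ^ 2)
        ≤ (2 * log n) ^ 2 * (r n * (8 * r n) ^ 2) := by gcongr
      _ = 256 * (log n ^ 2 * (r n : ℝ) ^ 3) := by ring
      _ ≤ K ^ 2 * π * n := by linarith
  exact (pow_le_pow_iff_left₀ (mul_nonneg zero_le_two (log_nonneg hN)) (by positivity)
    two_ne_zero).1 hsq_le

theorem exp_neg_mul_one_add_div_le {τ x : ℝ} (hτ : 0 < τ) {n : ℕ} (hn : 1 ≤ n)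
    (hx : 2 * log n ≤ x) : exp (-x) * (1 + n / τ) ≤ (1 + 1 / τ) / n := by
  have hN : (1 : ℝ) ≤ n := by exact_mod_cast hn
  have hexp : (n : ℝ) ^ 2 ≤ exp x :=
    calc (n : ℝ) ^ 2 = exp (2 * log n) := by rw [two_mul, exp_add, exp_log (by positivity)]; ring
      _ ≤ exp x := exp_le_exp.2 hx
  rw [exp_neg, ← div_eq_inv_mul, div_le_div_iff₀ (exp_pos _) (by positivity)]
  have hgap : (1 + 1 / τ) * (n : ℝ) ^ 2 - (1 + n / τ) * n = n * (n - 1) := by field_simp; ring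
  calc (1 + n / τ) * n ≤ (1 + 1 / τ) * (n : ℝ) ^ 2 := by nlinarith
    _ ≤ (1 + 1 / τ) * exp x := by gcongr

theorem coupling_max_deviation_probability_general
    {Ω : Type*} [MeasureSpace Ω]
    (τ c : ℝ) (hτ : 0 < τ) (hc : 0 < c)
    (r : ℕ → ℕ)
    (hrtop : Tendsto r atTop atTop)
    (hrate : Tendsto (fun n : ℕ => (Real.log n) ^ 2 * (r n : ℝ) ^ 3 / n) atTop (nhds 0))
    (X Xt : ℕ → ℕ → Ω → ℝ)  -- the triangular arrays `X_{n,j}` and `X̃_{n,j}`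
    (hXmeas : ∀ n j, Measurable (X n j))
    (hXtmeas : ∀ n j, Measurable (Xt n j))
    -- the coupling bound for the partial sums :
    (hcoupling : ∀ n, ∫⁻ ω, ENNReal.ofReal (Real.exp ((c / τ) *
        ⨆ j ∈ Finset.Icc 1 n,
          |(∑ i ∈ Finset.Icc 1 j, X n i ω) - ∑ i ∈ Finset.Icc 1 j, Xt n i ω|)) ∂ℙ
      ≤ ENNReal.ofReal (1 + n / τ))
    (S St : ℕ → ℕ → Ω → ℝ)
    (hS : ∀ n k ω, S n k ω = Real.sqrt (2 / n) *
      ∑ j ∈ Finset.Icc 1 n, X n j ω * Real.cos (2 * π * j * k / n))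
    (hSt : ∀ n k ω, St n k ω = Real.sqrt (2 / n) *
      ∑ j ∈ Finset.Icc 1 n, Xt n j ω * Real.cos (2 * π * j * k / n)) :
    ∀ ε : ℝ, 0 < ε →
      Tendsto
        (fun n => ℙ {ω | ∃ k ∈ Finset.Icc 1 (r n),
          ε * Real.sqrt (2 * π / r n) < |S n k ω - St n k ω|})
        atTop (nhds 0) := by
  intro ε hε
  set t : ℕ → ℝ := fun n => ε * √(2 * π / r n) / (√(2 / n) * (1 + 2 * π * r n)) with ht
  have hevent : ∀ n, 0 < n → {ω | ∃ k ∈ Icc 1 (r n), ε * √(2 * π / r n) < |S n k ω - St n k ω|}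
      ⊆ {ω | t n < partialSumDist n (X n · ω) (Xt n · ω)} := by
    rintro n hn ω ⟨k, hk, hlt⟩
    have hkr : (k : ℝ) ≤ r n := by exact_mod_cast (mem_Icc.1 hk).2
    have hD := partialSumDist_nonneg hn (X n · ω) (Xt n · ω)
    rw [Set.mem_ofPred_eq, ht, div_lt_iff₀ (by positivity)]
    calc _ < |S n k ω - St n k ω| := hlt
      _ ≤ √(2 / n) * (1 + 2 * π * k) * partialSumDist n (X n · ω) (Xt n · ω) := by
        rw [hS, hSt]
        exact abs_cosineSum_sub_le hn k _ _
      _ ≤ √(2 / n) * (1 + 2 * π * r n) * partialSumDist n (X n · ω) (Xt n · ω) := by gcongr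
      _ = _ := by ring
  have hmarkov : ∀ n, ℙ {ω | t n < partialSumDist n (X n · ω) (Xt n · ω)}
      ≤ ENNReal.ofReal (exp (-(c / τ * t n)) * (1 + n / τ)) := by
    intro n
    rw [ENNReal.ofReal_mul (exp_pos _).le]
    exact (measure_lt_le_exp_mul_lintegral ℙ (measurable_partialSumDist n (hXmeas n) (hXtmeas n))
      (div_pos hc hτ).le (t n)).trans (mul_le_mul_right (hcoupling n) _)
  have hlim : Tendsto (fun n : ℕ => ENNReal.ofReal ((1 + 1 / τ) / n)) atTop (nhds 0) := by
    simpa using ENNReal.tendsto_ofReal (tendsto_const_div_atTop_nhds_zero_nat (1 + 1 / τ))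
  refine tendsto_of_tendsto_of_tendsto_of_le_of_le' tendsto_const_nhds hlim
    (Eventually.of_forall fun _ => zero_le) ?_
  filter_upwards [eventually_two_mul_log_le hrtop hrate (mul_pos (div_pos hc hτ) hε),
    eventually_ge_atTop 1] with n hlog hn
  calc _ ≤ _ := measure_mono (hevent n hn)
    _ ≤ _ := hmarkov n
    _ ≤ _ := ENNReal.ofReal_le_ofReal
      (exp_neg_mul_one_add_div_le hτ hn (hlog.trans_eq (by rw [ht]; ring)))

/-- Coupling step in the proof of Proposition 2: if for each `n` the variables
`X_1, …, X_n` are coupled with i.i.d. standard normals `X̃_1, …, X̃_n` so that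
`E exp((c/τ) max_{1≤j≤n} |S_j − S̃_j|) ≤ 1 + n/τ`, and `r_n ≤ ⌊(n-1)/2⌋`, `r_n → ∞`,
`(log n)² r_n³ / n → 0`, then the probability that some trigonometric weighted sum
deviates from its Gaussian counterpart by more than `ε√(2π/r_n)` tends to `0`. -/
theorem coupling_max_deviation_probability
    {Ω : Type*} [MeasureSpace Ω] [IsProbabilityMeasure (ℙ : Measure Ω)]
    (τ c : ℝ) (hτ : 0 < τ) (hc : 0 < c)
    (r : ℕ → ℕ)
    (hrle : ∀ n, r n ≤ (n - 1) / 2)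
    (hrtop : Tendsto r atTop atTop)
    (hrate : Tendsto (fun n : ℕ => (Real.log n) ^ 2 * (r n : ℝ) ^ 3 / n) atTop (nhds 0))
    (X Xt : ℕ → ℕ → Ω → ℝ)  -- the triangular arrays `X_{n,j}` and `X̃_{n,j}`
    (hXmeas : ∀ n j, Measurable (X n j))
    (hXtmeas : ∀ n j, Measurable (Xt n j))
    -- for each `n`, `X̃_1, …, X̃_n` are i.i.d. standard normal :
    (hXtindep : ∀ n, iIndepFun
      (fun j : Fin n => Xt n ((j : ℕ) + 1)) ℙ)
    (hXtgauss : ∀ n, ∀ j ∈ Finset.Icc 1 n, Measure.map (Xt n j) ℙ = gaussianReal 0 1)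
    -- the coupling bound for the partial sums :
    (hcoupling : ∀ n, ∫⁻ ω, ENNReal.ofReal (Real.exp ((c / τ) *
        ⨆ j ∈ Finset.Icc 1 n,
          |(∑ i ∈ Finset.Icc 1 j, X n i ω) - ∑ i ∈ Finset.Icc 1 j, Xt n i ω|)) ∂ℙ
      ≤ ENNReal.ofReal (1 + n / τ))
    (S St : ℕ → ℕ → Ω → ℝ)
    (hS : ∀ n k ω, S n k ω = Real.sqrt (2 / n) *
      ∑ j ∈ Finset.Icc 1 n, X n j ω * Real.cos (2 * π * j * k / n))
    (hSt : ∀ n k ω, St n k ω = Real.sqrt (2 / n) *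
      ∑ j ∈ Finset.Icc 1 n, Xt n j ω * Real.cos (2 * π * j * k / n)) :
    ∀ ε : ℝ, 0 < ε →
      Tendsto
        (fun n => ℙ {ω | ∃ k ∈ Finset.Icc 1 (r n),
          ε * Real.sqrt (2 * π / r n) < |S n k ω - St n k ω|})
        atTop (nhds 0) :=
  coupling_max_deviation_probability_general τ c hτ hc r hrtop hrate X Xt hXmeas hXtmeas hcoupling S
    St hS hSt
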